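/- Let 0 < θ < 1/2 be real. Then for every square-summable real sequence (ξ_k)_{k∈ℤ≥0} the double series Σ_{j=0}^∞ Σ_{k=0}^∞ ξ_j ξ_k/(j+k+θ) converges and satisfies 0 ≤ Σ_{j,k} ξ_j ξ_k/(j+k+θ) ≤ (π/sin(πθ))·Σ_{k=0}^∞ ξ_k². Moreover the constant π/sin(πθ) is best possible: there exists a nonzero square-summable real sequence (ξ_k) for which Σ_{j,k} ξ_j ξ_k/(j+k+θ) = (π/sin(πθ))·Σ_k ξ_k². -/

import Mathlib

/-!
The vector `x k = Γ(k + θ) / k!` is a positive eigenvector of the kernel `1 / (j + k + θ)` with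
eigenvalue `Γ(θ) Γ(1 - θ) = π / sin(π θ)`: writing `1 / (j + k + θ) = ∫₀¹ t ^ (j + k + θ - 1) dt`
and summing the binomial series `∑ x j t ^ j = Γ(θ) (1 - t) ^ (-θ)` under the integral leaves a
Beta integral. Schur's test turns a positive eigenvector into the upper bound. Log-convexity of
`Γ` gives `x (k + 1) ≤ (k + 1) ^ (θ - 1)`, so for `θ < 1/2` the eigenvector is square summable and
attains the bound. The same integral representation writes every finite section of the quadratic
form as `∫₀¹ t ^ (θ - 1) (∑ ξ k t ^ k) ^ 2 dt ≥ 0`.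
-/

open Real MeasureTheory

section QuadraticForm

variable {ι : Type*} {K : ι → ι → ℝ}

lemma hasSum_prod_of_nonneg_of_hasSum_fiber {κ : Type*} {f : ι × κ → ℝ} (hf : 0 ≤ f)
    {g : ι → ℝ} (hfg : ∀ i, HasSum (fun j => f (i, j)) (g i)) {a : ℝ} (hg : HasSum g a) :
    HasSum f a := by
  have hsum : Summable f := (summable_prod_of_nonneg hf).2
    ⟨fun i => (hfg i).summable, hg.summable.congr fun i => (hfg i).tsum_eq.symm⟩
  rw [← hg.tsum_eq, ← tsum_congr fun i => (hfg i).tsum_eq]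
  exact (hsum.tsum_prod' fun i => (hfg i).summable) ▸ hsum.hasSum

lemma hasSum_mul_mul_of_eigenvector (hK : ∀ i j, 0 ≤ K i j) {x : ι → ℝ} (hx : ∀ i, 0 ≤ x i)
    {c : ℝ} (hKx : ∀ i, HasSum (fun j => K i j * x j) (c * x i))
    (hx2 : Summable fun i => x i ^ 2) :
    HasSum (fun p : ι × ι => x p.1 * x p.2 * K p.1 p.2) (c * ∑' i, x i ^ 2) :=
  hasSum_prod_of_nonneg_of_hasSum_fiber (fun p => mul_nonneg (mul_nonneg (hx _) (hx _)) (hK _ _))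
    (fun i => ((hKx i).mul_left (x i)).congr_fun fun j => by ring)
    (hx2.hasSum.mul_left c |>.congr_fun fun i => by ring)

theorem schur_test (hK : ∀ i j, 0 ≤ K i j) (hK_symm : ∀ i j, K i j = K j i) {x : ι → ℝ}
    (hx : ∀ i, 0 < x i) {c : ℝ} (hKx : ∀ i, HasSum (fun j => K i j * x j) (c * x i))
    {ξ : ι → ℝ} (hξ : Summable fun i => ξ i ^ 2) :
    Summable (fun p : ι × ι => ξ p.1 * ξ p.2 * K p.1 p.2) ∧
      ∑' p : ι × ι, ξ p.1 * ξ p.2 * K p.1 p.2 ≤ c * ∑' i, ξ i ^ 2 := by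
  set h : ι × ι → ℝ := fun p => ξ p.1 ^ 2 / x p.1 * K p.1 p.2 * x p.2
  have h_hasSum : HasSum h (c * ∑' i, ξ i ^ 2) :=
    hasSum_prod_of_nonneg_of_hasSum_fiber
      (fun p => by have := hK p.1 p.2; have := hx p.1; have := hx p.2; positivity)
      (fun i => ((hKx i).mul_left (ξ i ^ 2 / x i)).congr_fun fun j => by simp only [h]; ring)
      (hξ.hasSum.mul_left c |>.congr_fun fun i => by field_simp [(hx i).ne'])
  have h_swap : HasSum (h ∘ Prod.swap) (c * ∑' i, ξ i ^ 2) :=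
    (Equiv.prodComm ι ι).hasSum_iff.2 h_hasSum
  -- AM-GM with weights `x`: `2 |ξ i ξ j| ≤ (x j / x i) ξ i ^ 2 + (x i / x j) ξ j ^ 2`
  have h_bound : ∀ p : ι × ι, ‖ξ p.1 * ξ p.2 * K p.1 p.2‖ ≤ (h p + h p.swap) / 2 := by
    rintro ⟨i, j⟩
    have hi := hx i; have hj := hx j
    have amgm : |ξ i| * |ξ j| ≤ (ξ i ^ 2 / x i * x j + ξ j ^ 2 / x j * x i) / 2 := by
      rw [← sub_nonneg]
      have : (ξ i ^ 2 / x i * x j + ξ j ^ 2 / x j * x i) / 2 - |ξ i| * |ξ j|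
          = (x j * |ξ i| - x i * |ξ j|) ^ 2 / (2 * x i * x j) := by
        field_simp
        rw [← sq_abs (ξ i), ← sq_abs (ξ j)]
        ring
      rw [this]
      positivity
    simp only [h, Prod.swap, Real.norm_eq_abs, abs_mul, abs_of_nonneg (hK i j), hK_symm j i]
    calc |ξ i| * |ξ j| * K i j
        ≤ (ξ i ^ 2 / x i * x j + ξ j ^ 2 / x j * x i) / 2 * K i j :=
          mul_le_mul_of_nonneg_right amgm (hK i j)
      _ = _ := by ring
  have h_avg := (h_hasSum.add h_swap).div_const 2
  have h_summable := Summable.of_norm_bounded h_avg.summable h_bound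
  refine ⟨h_summable, ?_⟩
  calc ∑' p : ι × ι, ξ p.1 * ξ p.2 * K p.1 p.2 ≤ ∑' p, (h p + (h ∘ Prod.swap) p) / 2 :=
        h_summable.tsum_le_tsum (fun p => (Real.le_norm_self _).trans (h_bound p)) h_avg.summable
    _ = c * ∑' i, ξ i ^ 2 := by rw [h_avg.tsum_eq]; ring

lemma tsum_nonneg_of_sum_product_self_nonneg {f : ι × ι → ℝ} (hf : Summable f)
    (h : ∀ s : Finset ι, 0 ≤ ∑ p ∈ s ×ˢ s, f p) : 0 ≤ ∑' p, f p :=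
  ge_of_tendsto' (hf.hasSum.comp
    (Filter.tendsto_finsetProd_atTop.comp Filter.tendsto_atTop_diagonal)) h

end QuadraticForm

lemma ae_mem_uIoc_imp_of_forall_mem_Ioo {a b : ℝ} (hab : a ≤ b) {P : ℝ → Prop}
    (h : ∀ t ∈ Set.Ioo a b, P t) : ∀ᵐ t, t ∈ Set.uIoc a b → P t := by
  filter_upwards [Measure.ae_ne volume b] with t htb ht
  rw [Set.uIoc_of_le hab] at ht
  exact h t ⟨ht.1, lt_of_le_of_ne ht.2 htb⟩

lemma integral_rpow_mul_pow {s : ℝ} (hs : 0 < s) (m : ℕ) :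
    ∫ t in (0 : ℝ)..1, t ^ (s - 1) * t ^ m = ((m : ℝ) + s)⁻¹ := by
  rw [intervalIntegral.integral_congr_uIoo (g := fun t => t ^ ((m : ℝ) + s - 1)), integral_rpow]
  · simp [zero_rpow (by positivity : (m : ℝ) + s ≠ 0)]
  · left; linarith [(m.cast_nonneg : (0 : ℝ) ≤ m)]
  · intro t ht
    rw [Set.uIoo_of_le zero_le_one] at ht
    dsimp only
    rw [← rpow_natCast, ← rpow_add ht.1]
    ring_nf

lemma integral_rpow_mul_one_sub_rpow {a b : ℝ} (ha : 0 < a) (hb : 0 < b) :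
    ∫ t in (0 : ℝ)..1, t ^ (a - 1) * (1 - t) ^ (b - 1) = Gamma a * Gamma b / Gamma (a + b) := by
  have hcast : ((∫ t in (0 : ℝ)..1, t ^ (a - 1) * (1 - t) ^ (b - 1) : ℝ) : ℂ)
      = Complex.betaIntegral a b := by
    rw [Complex.betaIntegral, ← intervalIntegral.integral_ofReal]
    refine intervalIntegral.integral_congr fun t ht => ?_
    rw [Set.uIcc_of_le zero_le_one] at ht
    push_cast
    rw [Complex.ofReal_cpow ht.1, Complex.ofReal_cpow (by linarith [ht.2])]
    push_cast
    ring_nf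
  rw [← Complex.ofReal_inj, hcast, Complex.betaIntegral_eq_Gamma_mul_div _ _ (by simpa) (by simpa),
    ← Complex.ofReal_add, Complex.Gamma_ofReal, Complex.Gamma_ofReal, Complex.Gamma_ofReal]
  push_cast
  rfl

lemma sum_product_self_mul_inv_add_nonneg {θ : ℝ} (hθ : 0 < θ) (ξ : ℕ → ℝ) (s : Finset ℕ) :
    0 ≤ ∑ p ∈ s ×ˢ s, ξ p.1 * ξ p.2 * ((p.1 : ℝ) + p.2 + θ)⁻¹ := by
  have hint : ∀ m : ℕ, IntervalIntegrable (fun t : ℝ => t ^ (θ - 1) * t ^ m) volume 0 1 :=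
    fun m => (intervalIntegral.intervalIntegrable_rpow' (by linarith)).mul_continuousOn
      (by fun_prop)
  have hrepr : ∑ p ∈ s ×ˢ s, ξ p.1 * ξ p.2 * ((p.1 : ℝ) + p.2 + θ)⁻¹
      = ∫ t in (0 : ℝ)..1, t ^ (θ - 1) * (∑ i ∈ s, ξ i * t ^ i) ^ 2 := by
    have hterm : ∀ p : ℕ × ℕ, ξ p.1 * ξ p.2 * ((p.1 : ℝ) + p.2 + θ)⁻¹
        = ∫ t in (0 : ℝ)..1, ξ p.1 * ξ p.2 * (t ^ (θ - 1) * t ^ (p.1 + p.2)) := by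
      intro p
      rw [intervalIntegral.integral_const_mul, integral_rpow_mul_pow hθ]
      push_cast
      rfl
    rw [Finset.sum_congr rfl fun p _ => hterm p, ← intervalIntegral.integral_finsetSum
      fun p _ => (hint (p.1 + p.2)).const_mul _]
    refine intervalIntegral.integral_congr fun t _ => ?_
    rw [sq, Finset.sum_mul_sum, Finset.sum_product, Finset.mul_sum]
    refine Finset.sum_congr rfl fun i _ => ?_
    rw [Finset.mul_sum]
    refine Finset.sum_congr rfl fun j _ => ?_
    ring
  rw [hrepr]
  exact intervalIntegral.integral_nonneg zero_le_one fun t ht =>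
    mul_nonneg (rpow_nonneg ht.1 _) (sq_nonneg _)

section GammaDivFactorial

noncomputable def gammaDivFactorial (θ : ℝ) (k : ℕ) : ℝ := Gamma (k + θ) / k.factorial

variable {θ : ℝ}

lemma gammaDivFactorial_pos (hθ : 0 < θ) (k : ℕ) : 0 < gammaDivFactorial θ k :=
  div_pos (Gamma_pos_of_pos (by positivity)) (mod_cast k.factorial_pos)

lemma gammaDivFactorial_eq_Gamma_mul_choose (hθ : 0 < θ) (n : ℕ) :
    gammaDivFactorial θ n = Gamma θ * Ring.choose (θ + n - 1) n := by
  have hpoch : Gamma (n + θ) = Gamma θ * (ascPochhammer ℝ n).eval θ := by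
    induction n with
    | zero => simp
    | succ n ih =>
      rw [Nat.cast_succ, add_right_comm, Gamma_add_one (by positivity), ih,
        ascPochhammer_succ_eval]
      ring
  rw [gammaDivFactorial, hpoch, Ring.choose_eq_smul,
    Polynomial.descPochhammer_smeval_eq_ascPochhammer, show θ + n - 1 - n + 1 = θ by ring,
    Polynomial.ascPochhammer_smeval_eq_eval, smul_eq_mul]
  ring

lemma hasSum_gammaDivFactorial_mul_pow (hθ : 0 < θ) {t : ℝ} (ht : |t| < 1) :
    HasSum (fun n => gammaDivFactorial θ n * t ^ n) (Gamma θ / (1 - t) ^ θ) := by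
  have h := (one_div_one_sub_rpow_hasFPowerSeriesOnBall_zero θ).hasSum
    (y := t) (by simpa [enorm_eq_nnnorm, ← NNReal.coe_lt_one] using ht)
  simp only [FormalMultilinearSeries.ofScalars_apply_eq, smul_eq_mul, zero_add] at h
  simpa only [← mul_assoc, ← gammaDivFactorial_eq_Gamma_mul_choose hθ, mul_one_div]
    using h.mul_left (Gamma θ)

lemma gammaDivFactorial_succ_le (hθ0 : 0 < θ) (hθ1 : θ < 1) (k : ℕ) :
    gammaDivFactorial θ (k + 1) ≤ ((k : ℝ) + 1) ^ (θ - 1) := by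
  set m : ℝ := k + 1
  have hm : 0 < m := by positivity
  have hconv : Gamma (m + θ) ≤ Gamma m ^ (1 - θ) * Gamma (m + 1) ^ θ := by
    convert Gamma_mul_add_mul_le_rpow_Gamma_mul_rpow_Gamma hm (by linarith : 0 < m + 1)
      (by linarith : 0 < 1 - θ) hθ0 (by ring) using 2
    ring
  have hGm : Gamma (m + 1) = m * Gamma m := Gamma_add_one hm.ne'
  have hfac : ((k + 1).factorial : ℝ) = Gamma (m + 1) := by
    rw [← Gamma_nat_eq_factorial]; push_cast; rfl
  have hGpos : 0 < Gamma m := Gamma_pos_of_pos hm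
  have hrhs : Gamma m ^ (1 - θ) * Gamma (m + 1) ^ θ = m ^ (θ - 1) * Gamma (m + 1) := by
    rw [hGm, mul_rpow hm.le hGpos.le, rpow_sub_one hm.ne', ← mul_assoc,
      mul_comm (Gamma m ^ (1 - θ)), mul_assoc, ← rpow_add hGpos, sub_add_cancel, rpow_one]
    field_simp
  rw [gammaDivFactorial, hfac, div_le_iff₀ (Gamma_pos_of_pos (by linarith)), ← hrhs]
  push_cast
  exact hconv

lemma summable_gammaDivFactorial_sq (hθ0 : 0 < θ) (hθ : θ < 1 / 2) :
    Summable (fun k => gammaDivFactorial θ k ^ 2) := by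
  rw [← summable_nat_add_iff 1]
  have hr : Summable (fun k : ℕ => ((k : ℝ) + 1) ^ (2 * θ - 2)) := by
    simpa using (summable_nat_add_iff 1).2 (summable_nat_rpow.2 (by linarith : 2 * θ - 2 < -1))
  refine hr.of_nonneg_of_le (fun k => sq_nonneg _) fun k => ?_
  calc gammaDivFactorial θ (k + 1) ^ 2 ≤ (((k : ℝ) + 1) ^ (θ - 1)) ^ 2 :=
        pow_le_pow_left₀ (gammaDivFactorial_pos hθ0 _).le
          (gammaDivFactorial_succ_le hθ0 (by linarith) k) 2
    _ = ((k : ℝ) + 1) ^ (2 * θ - 2) := by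
        rw [← rpow_natCast, ← rpow_mul (by positivity)]; ring_nf

lemma hasSum_inv_add_mul_gammaDivFactorial (hθ0 : 0 < θ) (hθ1 : θ < 1) (k : ℕ) :
    HasSum (fun j : ℕ => ((k : ℝ) + j + θ)⁻¹ * gammaDivFactorial θ j)
      (Gamma θ * Gamma (1 - θ) * gammaDivFactorial θ k) := by
  set s : ℝ := k + θ with hs_def
  have hs : 0 < s := by positivity
  set F : ℕ → ℝ → ℝ := fun j t => gammaDivFactorial θ j * (t ^ (s - 1) * t ^ j)
  set g : ℝ → ℝ := fun t => Gamma θ * (t ^ (s - 1) * (1 - t) ^ ((1 - θ) - 1))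
  have hF_nonneg : ∀ j, ∀ t ∈ Set.Ioo (0 : ℝ) 1, 0 ≤ F j t := fun j t ht =>
    mul_nonneg (gammaDivFactorial_pos hθ0 j).le (by have := ht.1.le; positivity)
  have hF_hasSum : ∀ t ∈ Set.Ioo (0 : ℝ) 1, HasSum (fun j => F j t) (g t) := by
    intro t ht
    have h := (hasSum_gammaDivFactorial_mul_pow hθ0 (t := t)
      (by rw [abs_lt]; constructor <;> linarith [ht.1, ht.2])).mul_left (t ^ (s - 1))
    rw [show g t = t ^ (s - 1) * (Gamma θ / (1 - t) ^ θ) by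
      simp only [g, sub_sub_cancel_left, rpow_neg (by linarith [ht.2] : 0 ≤ 1 - t)]; ring]
    exact h.congr_fun fun j => by ring
  have hg_integral :
      ∫ t in (0 : ℝ)..1, g t = Gamma θ * Gamma (1 - θ) * gammaDivFactorial θ k := by
    rw [intervalIntegral.integral_const_mul, integral_rpow_mul_one_sub_rpow hs (by linarith),
      show s + (1 - θ) = k + 1 by ring, Gamma_nat_eq_factorial, gammaDivFactorial]
    ring
  have hg_integrable : IntervalIntegrable g volume 0 1 := by
    refine intervalIntegral.intervalIntegrable_of_integral_ne_zero ?_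
    rw [hg_integral]
    exact (mul_pos (mul_pos (Gamma_pos_of_pos hθ0) (Gamma_pos_of_pos (by linarith)))
      (gammaDivFactorial_pos hθ0 k)).ne'
  have hae := @ae_mem_uIoc_imp_of_forall_mem_Ioo 0 1 zero_le_one
  have h_integrals := intervalIntegral.hasSum_integral_of_dominated_convergence F (fun j => by fun_prop)
    (fun j => hae fun t ht => (norm_of_nonneg (hF_nonneg j t ht)).le)
    (hae fun t ht => (hF_hasSum t ht).summable)
    (hg_integrable.congr_uIoo fun t ht => ?_) (hae hF_hasSum)
  · rw [hg_integral] at h_integrals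
    refine h_integrals.congr_fun fun j => ?_
    rw [intervalIntegral.integral_const_mul, integral_rpow_mul_pow hs, hs_def]
    ring
  · rw [Set.uIoo_of_le zero_le_one] at ht
    exact (hF_hasSum t ht).tsum_eq.symm

end GammaDivFactorial

/-- Hilbert's double series inequality for the generalized Hilbert matrix, `0 < θ < 1/2`:
the bound `π/sin(πθ)` holds and is attained by some nonzero square-summable sequence. -/
theorem hilbert_inequality_small_theta (θ : ℝ) (hθ0 : 0 < θ) (hθ : θ < 1 / 2) :
    (∀ ξ : ℕ → ℝ, Summable (fun k => ξ k ^ 2) →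
      Summable (fun p : ℕ × ℕ => ξ p.1 * ξ p.2 / ((p.1 : ℝ) + p.2 + θ)) ∧
      0 ≤ ∑' p : ℕ × ℕ, ξ p.1 * ξ p.2 / ((p.1 : ℝ) + p.2 + θ) ∧
      ∑' p : ℕ × ℕ, ξ p.1 * ξ p.2 / ((p.1 : ℝ) + p.2 + θ)
        ≤ Real.pi / Real.sin (Real.pi * θ) * ∑' k : ℕ, ξ k ^ 2) ∧
    ∃ ξ : ℕ → ℝ, Summable (fun k => ξ k ^ 2) ∧ ξ ≠ 0 ∧
      ∑' p : ℕ × ℕ, ξ p.1 * ξ p.2 / ((p.1 : ℝ) + p.2 + θ)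
        = Real.pi / Real.sin (Real.pi * θ) * ∑' k : ℕ, ξ k ^ 2 := by
  set K : ℕ → ℕ → ℝ := fun i j => ((i : ℝ) + j + θ)⁻¹
  have hK : ∀ i j, 0 ≤ K i j := fun i j => by positivity
  have hK_symm : ∀ i j, K i j = K j i := fun i j => by simp only [K, add_comm (i : ℝ)]
  have hKx : ∀ i, HasSum (fun j => K i j * gammaDivFactorial θ j)
      (π / sin (π * θ) * gammaDivFactorial θ i) := by
    rw [← Gamma_mul_Gamma_one_sub]
    exact hasSum_inv_add_mul_gammaDivFactorial hθ0 (by linarith)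
  have hform : ∀ ξ : ℕ → ℝ, (fun p : ℕ × ℕ => ξ p.1 * ξ p.2 / ((p.1 : ℝ) + p.2 + θ))
      = fun p => ξ p.1 * ξ p.2 * K p.1 p.2 := fun ξ => funext fun p => div_eq_mul_inv _ _
  refine ⟨fun ξ hξ => ?_, gammaDivFactorial θ, summable_gammaDivFactorial_sq hθ0 hθ,
    fun h => (gammaDivFactorial_pos hθ0 0).ne' (congrFun h 0), ?_⟩
  · obtain ⟨hsum, hle⟩ := schur_test hK hK_symm (gammaDivFactorial_pos hθ0) hKx hξ
    rw [hform]
    exact ⟨hsum, tsum_nonneg_of_sum_product_self_nonneg hsum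
      (sum_product_self_mul_inv_add_nonneg hθ0 ξ), hle⟩
  · rw [hform]
    exact (hasSum_mul_mul_of_eigenvector hK (fun i => (gammaDivFactorial_pos hθ0 i).le) hKx
      (summable_gammaDivFactorial_sq hθ0 hθ)).tsum_eq
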